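/- arXiv:2304.07928 — 5 statements merged into one kernel-verified Lean document; each statement's English description precedes it below -/
import Mathlib

section
/- Let W be an n × k integer matrix (k < n) with full column rank, with rows w₁,...,wₙ, and let β = max |W_{ij}|. Then for any real α ≥ 1 + k^k β^k and any subset S ⊆ {1,...,n} with |S| = k−1 and rank(W_S) = k−1, the k × k matrix formed by stacking the row α w₁ + α² w₂ + ... + αⁿ wₙ on top of W_S has full column rank (nonzero determinant). -/
/-!
Siegel's lemma gives a nonzero integer vector `t` with `W_S t = 0` and entries at most
`(kβ)^(k-1)`. As `rank W_S = k - 1`, it spans the kernel of `W_S`, so the stacked matrix has full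
rank as soon as its top row does not annihilate `t`. That value is `∑ᵢ α^(i+1) (W t)ᵢ`, where the
integers `(W t)ᵢ` are not all zero (`W` has full column rank) and bounded by `k^k β^k`; Cauchy's
bound on the roots of a polynomial rules out its vanishing at `α ≥ 1 + k^k β^k`.
-/

open scoped Matrix

namespace Polynomial

theorem aeval_ne_zero_of_abs_coeff_le {p : ℤ[X]} (hp : p ≠ 0) {B α : ℝ}
    (hB : ∀ i, |(p.coeff i : ℝ)| ≤ B) (hα : 1 + B ≤ α) : aeval α p ≠ 0 := by
  set q := p.map (algebraMap ℤ ℝ)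
  have hcoeff (i : ℕ) : ‖q.coeff i‖₊ ≤ B.toNNReal := by
    rw [← NNReal.coe_le_coe, coe_nnnorm, Real.coe_toNNReal _ ((abs_nonneg _).trans (hB 0))]
    simpa [q] using hB i
  have hlead : 1 ≤ ‖q.leadingCoeff‖₊ := by
    rw [leadingCoeff_map_of_injective (RingHom.injective_int _), ← NNReal.coe_le_coe,
      coe_nnnorm, algebraMap_int_eq, eq_intCast, Real.norm_eq_abs, ← Int.cast_abs, NNReal.coe_one]
    exact_mod_cast Int.one_le_abs (leadingCoeff_ne_zero.2 hp)
  have hcauchy : cauchyBound q ≤ B.toNNReal + 1 := by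
    grw [cauchyBound, div_le_self zero_le hlead]
    gcongr
    exact Finset.sup_le fun i _ => hcoeff i
  intro hroot
  have hlt := IsRoot.norm_lt_cauchyBound
    ((Polynomial.map_ne_zero_iff (RingHom.injective_int _)).2 hp) (a := α)
    (by rwa [IsRoot, eval_map_algebraMap])
  have : ‖α‖ < B + 1 := by
    have := (NNReal.coe_lt_coe.2 (hlt.trans_le hcauchy))
    rwa [coe_nnnorm, NNReal.coe_add, Real.coe_toNNReal _ ((abs_nonneg _).trans (hB 0)),
      NNReal.coe_one] at this
  linarith [Real.le_norm_self α]

end Polynomial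

open Polynomial in
theorem sum_pow_succ_mul_intCast_ne_zero {n : ℕ} {a : Fin n → ℤ} (ha : a ≠ 0) {B α : ℝ}
    (hB : ∀ i, |(a i : ℝ)| ≤ B) (hα : 1 + B ≤ α) :
    ∑ i : Fin n, α ^ ((i : ℕ) + 1) * a i ≠ 0 := by
  obtain ⟨i₀, -⟩ := Function.ne_iff.1 ha
  have hB0 : 0 ≤ B := (abs_nonneg _).trans (hB i₀)
  have hcoeff (i : ℕ) : |((ofFn n a).coeff i : ℝ)| ≤ B := by
    rcases lt_or_ge i n with hi | hi
    · simpa [hi] using hB ⟨i, hi⟩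
    · simpa [hi] using hB0
  have hsum : ∑ i : Fin n, α ^ ((i : ℕ) + 1) * a i = α * aeval α (ofFn n a) := by
    rw [ofFn_eq_sum_monomial, map_sum, Finset.mul_sum]
    exact Finset.sum_congr rfl fun i _ => by simp [aeval_monomial]; ring
  rw [hsum]
  exact mul_ne_zero (by linarith)
    (aeval_ne_zero_of_abs_coeff_le
      (fun h => ha (injective_ofFn n (h.trans (map_zero _).symm))) hcoeff hα)

namespace Int.Matrix

attribute [local instance] Matrix.seminormedAddCommGroup

theorem exists_ne_zero_mulVec_eq_zero_abs_le {m n : Type*} [Fintype m] [Fintype n]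
    (A : Matrix m n ℤ) (hcard : Fintype.card m + 1 = Fintype.card n) {β : ℤ} (hβ : 1 ≤ β)
    (hA : ∀ i j, |A i j| ≤ β) :
    ∃ t : n → ℤ, t ≠ 0 ∧ A *ᵥ t = 0 ∧ ∀ j, |t j| ≤ (Fintype.card n * β) ^ Fintype.card m := by
  rcases (Fintype.card m).eq_zero_or_pos with hm | hm
  · have : IsEmpty m := Fintype.card_eq_zero_iff.1 hm
    have : Nonempty n := Fintype.card_pos_iff.1 (by omega)
    exact ⟨1, one_ne_zero, Subsingleton.elim _ _, fun j => by simp⟩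
  obtain ⟨t, ht0, hAt, ht⟩ := exists_ne_zero_int_vec_norm_le A (by omega) hm
  refine ⟨t, ht0, hAt, fun j => ?_⟩
  have hnorm : max 1 ‖A‖ ≤ β := max_le (mod_cast hβ) <|
    (Matrix.norm_le_iff (by positivity)).2 fun i j => by
      rw [Int.norm_eq_abs]; exact_mod_cast hA i j
  have hexp : (Fintype.card m : ℝ) / (Fintype.card n - Fintype.card m) = Fintype.card m := by
    rw [← hcard]; push_cast; ring
  rw [hexp, Real.rpow_natCast] at ht
  have : ‖t j‖ ≤ ((Fintype.card n : ℝ) * β) ^ Fintype.card m :=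
    calc ‖t j‖ ≤ ‖t‖ := norm_le_pi_norm t j
      _ ≤ _ := ht
      _ ≤ _ := by gcongr
  rw [Int.norm_eq_abs] at this
  exact_mod_cast this

end Int.Matrix

namespace Matrix

theorem map_intCast_mulVec {R m n : Type*} [Ring R] [Fintype n] (A : Matrix m n ℤ)
    (t : n → ℤ) : A.map (Int.cast : ℤ → R) *ᵥ (Int.cast ∘ t) = Int.cast ∘ (A *ᵥ t) :=
  funext fun i => by simpa using (RingHom.map_mulVec (Int.castRingHom R) A t i).symm

theorem abs_mulVec_le {R m n : Type*} [CommRing R] [LinearOrder R] [IsStrictOrderedRing R]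
    [Fintype n] {A : Matrix m n R} {t : n → R} {β τ : R} (hA : ∀ i j, |A i j| ≤ β)
    (ht : ∀ j, |t j| ≤ τ) (i : m) : |(A *ᵥ t) i| ≤ Fintype.card n * (β * τ) := by
  calc |(A *ᵥ t) i| ≤ ∑ j, |A i j * t j| := Finset.abs_sum_le_sum_abs _ _
    _ ≤ ∑ _j : n, β * τ := Finset.sum_le_sum fun j _ => by
      rw [abs_mul]; exact mul_le_mul (hA i j) (ht j) (abs_nonneg _) ((abs_nonneg _).trans (hA i j))
    _ = Fintype.card n * (β * τ) := by simp

variable {K m n : Type*} [Field K] [Fintype n]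

theorem rank_add_finrank_ker (A : Matrix m n K) :
    A.rank + Module.finrank K (LinearMap.ker A.mulVecLin) = Fintype.card n := by
  rw [rank, LinearMap.finrank_range_add_finrank_ker, Module.finrank_fintype_fun_eq_card]

theorem ker_mulVecLin_eq_bot_iff_rank_eq (A : Matrix m n K) :
    LinearMap.ker A.mulVecLin = ⊥ ↔ A.rank = Fintype.card n := by
  rw [← Submodule.finrank_eq_zero, ← A.rank_add_finrank_ker]
  omega

theorem mulVec_intCast_ne_zero_of_rank_eq [CharZero K] {A : Matrix m n ℤ}
    (hA : (A.map (Int.cast : ℤ → K)).rank = Fintype.card n) {t : n → ℤ} (ht : t ≠ 0) :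
    A *ᵥ t ≠ 0 := by
  intro h
  have : (Int.cast ∘ t : n → K) ∈ LinearMap.ker (A.map (Int.cast : ℤ → K)).mulVecLin := by
    rw [LinearMap.mem_ker, mulVecLin_apply, map_intCast_mulVec, h]
    simp
  rw [(ker_mulVecLin_eq_bot_iff_rank_eq _).2 hA, Submodule.mem_bot] at this
  exact ht (funext fun j => by simpa using congrFun this j)

theorem rank_fromRows_row_eq_card {A : Matrix m n K} (hA : Fintype.card n ≤ A.rank + 1)
    (v : n → K) {t : n → K} (hAt : A *ᵥ t = 0) (hvt : v ⬝ᵥ t ≠ 0) :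
    (fromRows (of fun (_ : Fin 1) => v) A).rank = Fintype.card n := by
  have ht0 : t ≠ 0 := by rintro rfl; simp at hvt
  have hker : LinearMap.ker A.mulVecLin = K ∙ t := by
    refine (Submodule.eq_of_le_of_finrank_le
      (Submodule.span_le.2 (Set.singleton_subset_iff.2 hAt)) ?_).symm
    have := A.rank_add_finrank_ker
    rw [finrank_span_singleton ht0]
    omega
  rw [← ker_mulVecLin_eq_bot_iff_rank_eq, Submodule.eq_bot_iff]
  intro x hx
  rw [LinearMap.mem_ker, mulVecLin_apply, fromRows_mulVec] at hx
  have hAx : A *ᵥ x = 0 := funext fun i => congrFun hx (Sum.inr i)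
  have hvx : v ⬝ᵥ x = 0 := congrFun hx (Sum.inl 0)
  obtain ⟨c, rfl⟩ := Submodule.mem_span_singleton.1 (hker ▸ hAx : x ∈ K ∙ t)
  rw [dotProduct_smul, smul_eq_mul, mul_eq_zero] at hvx
  simp [hvx.resolve_right hvt]

end Matrix

theorem stacked_combo_full_rank_general (n k : ℕ)
    (W : Matrix (Fin n) (Fin k) ℤ)
    (hW : (W.map (Int.cast : ℤ → ℝ)).rank = k)
    (β : ℤ) (hβ : ∀ i j, |W i j| ≤ β)
    (α : ℝ) (hα : (1 : ℝ) + (k : ℝ) ^ k * (β : ℝ) ^ k ≤ α)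
    (S : Finset (Fin n)) (hScard : S.card = k - 1)
    (hSrank : ((W.map (Int.cast : ℤ → ℝ)).submatrix (fun i : S => (i : Fin n)) id).rank
      = k - 1) :
    (Matrix.fromRows
        (Matrix.of fun (_ : Fin 1) (j : Fin k) =>
          ∑ i : Fin n, α ^ ((i : ℕ) + 1) * (W i j : ℝ))
        ((W.map (Int.cast : ℤ → ℝ)).submatrix (fun i : S => (i : Fin n)) id)).rank = k := by
  obtain _ | k := k
  · exact Nat.le_zero.1 ((Matrix.rank_le_card_width _).trans_eq (Fintype.card_fin 0))
  have hβ1 : 1 ≤ β := by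
    obtain ⟨i, j, hij⟩ : ∃ i j, W i j ≠ 0 := by
      by_contra! h
      simp [show W = 0 from Matrix.ext h] at hW
    exact (Int.one_le_abs hij).trans (hβ i j)
  obtain ⟨t, ht0, hWSt, ht⟩ := Int.Matrix.exists_ne_zero_mulVec_eq_zero_abs_le
    (W.submatrix (fun i : S => (i : Fin n)) id) (by simp [hScard]) hβ1 (fun i j => hβ _ _)
  have hWt : W *ᵥ t ≠ 0 := Matrix.mulVec_intCast_ne_zero_of_rank_eq (by simpa using hW) ht0
  have hWt_le (i : Fin n) : |((W *ᵥ t) i : ℝ)| ≤ (((k + 1 : ℕ) : ℝ) * β) ^ (k + 1) := by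
    have := Matrix.abs_mulVec_le hβ ht i
    rw [Fintype.card_fin, Fintype.card_coe, hScard, Nat.add_sub_cancel, ← mul_assoc,
      ← pow_succ'] at this
    exact_mod_cast this
  refine (Matrix.rank_fromRows_row_eq_card (by simp [hSrank]) _ (t := Int.cast ∘ t) ?_ ?_).trans
    (Fintype.card_fin _)
  · rw [Matrix.submatrix_map, Matrix.map_intCast_mulVec, hWSt]
    simp
  · change Matrix.vecMul (fun i : Fin n => α ^ ((i : ℕ) + 1)) (W.map (Int.cast : ℤ → ℝ)) ⬝ᵥ _ ≠ 0
    rw [← Matrix.dotProduct_mulVec, Matrix.map_intCast_mulVec]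
    exact sum_pow_succ_mul_intCast_ne_zero hWt hWt_le (by rwa [mul_pow])

/-- Lemma 3 of the paper: for an integer `n × k` matrix `W` (`k < n`) with full column rank,
entries bounded by `β`, any `α ≥ 1 + k^k β^k`, and any row set `S` of cardinality `k-1` with
`rank W_S = k - 1`, the matrix obtained by stacking the row `α w₁ + α² w₂ + ⋯ + αⁿ wₙ` on top
of `W_S` has full column rank. -/
theorem stacked_combo_full_rank (n k : ℕ) (hk : k < n)
    (W : Matrix (Fin n) (Fin k) ℤ)
    (hW : (W.map (Int.cast : ℤ → ℝ)).rank = k)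
    (β : ℤ) (hβ : ∀ i j, |W i j| ≤ β)
    (α : ℝ) (hα : (1 : ℝ) + (k : ℝ) ^ k * (β : ℝ) ^ k ≤ α)
    (S : Finset (Fin n)) (hScard : S.card = k - 1)
    (hSrank : ((W.map (Int.cast : ℤ → ℝ)).submatrix (fun i : S => (i : Fin n)) id).rank
      = k - 1) :
    (Matrix.fromRows
        (Matrix.of fun (_ : Fin 1) (j : Fin k) =>
          ∑ i : Fin n, α ^ ((i : ℕ) + 1) * (W i j : ℝ))
        ((W.map (Int.cast : ℤ → ℝ)).submatrix (fun i : S => (i : Fin n)) id)).rank = k :=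
  stacked_combo_full_rank_general n k W hW β hβ α hα S hScard hSrank
end

section
/- Let A be an n × n matrix with a simple eigenvalue λ with eigenvector x, and S ⊆ {1,...,n}. Then the stacked matrix col{A − λI, I^{[n]\S}} has column rank n − 1 (rank deficient) if and only if S contains the support of x, i.e., x_j = 0 for all j ∉ S. -/
/-!
The kernel of the stacked matrix is the intersection of the kernels of its two blocks:
`ker (A - λI) = ℂ ∙ x` because `λ` is simple, and `ker I^{[n]\S}` consists of the vectors
supported in `S`. The line `ℂ ∙ x` meets that subspace in itself or in `0`, according as
`x` is supported in `S` or not, so by rank–nullity the rank is `n - 1` or `n`.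
-/

namespace Matrix

variable {m m' n R K : Type*}

theorem ker_mulVecLin_fromRows [Fintype n] [CommSemiring R]
    (B : Matrix m n R) (C : Matrix m' n R) :
    LinearMap.ker (fromRows B C).mulVecLin =
      LinearMap.ker B.mulVecLin ⊓ LinearMap.ker C.mulVecLin := by
  ext v
  rw [Submodule.mem_inf, LinearMap.mem_ker, LinearMap.mem_ker, LinearMap.mem_ker,
    mulVecLin_apply, fromRows_mulVec, ← Sum.elim_zero_zero, Sum.elim_eq_iff]
  rfl

theorem rank_add_finrank_ker_mulVecLin [Fintype n] [Field K] (M : Matrix m n K) :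
    M.rank + Module.finrank K (LinearMap.ker M.mulVecLin) = Fintype.card n := by
  rw [rank, LinearMap.finrank_range_add_finrank_ker, Module.finrank_fintype_fun_eq_card]

theorem of_ite_mem_eq_diagonal [DecidableEq n] [Zero R] [One R] (S : Finset n) :
    (of fun i j : n => if j ∈ S then (0 : R) else if i = j then 1 else 0) =
      diagonal fun i => if i ∈ S then 0 else 1 := by
  ext i j
  by_cases hij : i = j
  · subst hij; simp
  · simp [hij]

theorem diagonal_ite_mem_mulVec_eq_zero_iff [Fintype n] [DecidableEq n] [Semiring R]
    (S : Finset n) (v : n → R) :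
    (diagonal fun i => if i ∈ S then (0 : R) else 1) *ᵥ v = 0 ↔ ∀ j, j ∉ S → v j = 0 := by
  simp only [funext_iff, mulVec_diagonal, Pi.zero_apply]
  refine forall_congr' fun j => ?_
  by_cases hj : j ∈ S <;> simp [hj]

theorem ker_mulVecLin_sub_smul_one_eq_span [Fintype n] [DecidableEq n] [Field K]
    {B : Matrix n n K} {μ : K} {x : n → K} (heig : B *ᵥ x = μ • x)
    (hsimple : ∀ v, B *ᵥ v = μ • v → ∃ c : K, v = c • x) :
    LinearMap.ker (B - μ • (1 : Matrix n n K)).mulVecLin = K ∙ x := by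
  ext v
  rw [LinearMap.mem_ker, mulVecLin_apply, sub_mulVec, smul_mulVec, one_mulVec, sub_eq_zero,
    Submodule.mem_span_singleton]
  constructor
  · intro hv
    obtain ⟨c, rfl⟩ := hsimple v hv
    exact ⟨c, rfl⟩
  · rintro ⟨c, rfl⟩
    rw [mulVec_smul, heig, smul_comm]

end Matrix

theorem Submodule.finrank_span_singleton_inf {K V : Type*} [DivisionRing K]
    [AddCommGroup V] [Module K V] {x : V} (hx : x ≠ 0) (W : Submodule K V) [Decidable (x ∈ W)] :
    Module.finrank K ↥((K ∙ x) ⊓ W) = if x ∈ W then 1 else 0 := by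
  split_ifs with hxW
  · rw [inf_eq_left.mpr ((span_singleton_le_iff_mem x W).mpr hxW), finrank_span_singleton hx]
  · rw [disjoint_iff.mp ((disjoint_span_singleton' hx).mpr hxW).symm, finrank_bot]

open Matrix in
/-- For a simple eigenvalue `λ` of `A` with eigenvector `x`, the stacked matrix
`col{A - λI, I^{[n]\S}}` has rank `n - 1` (column rank deficient) iff `S` contains the
support of `x`, i.e. `x_j = 0` for all `j ∉ S`. -/
theorem simple_eigenvalue_rank_deficient_iff_support (n : ℕ)
    (A : Matrix (Fin n) (Fin n) ℝ) (lam : ℂ) (x : Fin n → ℂ)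
    (hx : x ≠ 0)
    (heig : (A.map (Complex.ofReal)).mulVec x = lam • x)
    (hsimple : ∀ v : Fin n → ℂ, (A.map (Complex.ofReal)).mulVec v = lam • v → ∃ c : ℂ, v = c • x)
    (S : Finset (Fin n)) :
    (Matrix.fromRows (A.map (Complex.ofReal) - lam • (1 : Matrix (Fin n) (Fin n) ℂ))
        (Matrix.of fun i j : Fin n => if j ∈ S then (0 : ℂ) else if i = j then 1 else 0)).rank
      = n - 1
    ↔ ∀ j : Fin n, j ∉ S → x j = 0 := by
  classical
  have hn : 0 < n := Nat.pos_of_ne_zero fun h => hx (by subst h; exact Subsingleton.elim _ _)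
  rw [of_ite_mem_eq_diagonal, ← diagonal_ite_mem_mulVec_eq_zero_iff, ← mulVecLin_apply,
    ← LinearMap.mem_ker]
  have hker := rank_add_finrank_ker_mulVecLin
    (fromRows (A.map Complex.ofReal - lam • (1 : Matrix (Fin n) (Fin n) ℂ))
      (diagonal fun i : Fin n => if i ∈ S then (0 : ℂ) else 1))
  rw [ker_mulVecLin_fromRows, ker_mulVecLin_sub_smul_one_eq_span heig hsimple,
    Submodule.finrank_span_singleton_inf hx, Fintype.card_fin] at hker
  split_ifs at hker with hxW
  · exact iff_of_true (by omega) hxW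
  · exact iff_of_false (by omega) hxW
end

section
/- Suppose S* ⊆ {1,...,n} is a set of minimum cardinality such that rank(col{A − λI, I^{[n]\S*}, F}) > rank(col{A − λI, I^{[n]\S*}}). Then necessarily rank(col{A − λI, I^{[n]\S*}, F}) = n and rank(col{A − λI, I^{[n]\S*}}) = n − 1. -/
/-- `I^{[n]\S}`: the identity matrix with the columns indexed by `S` zeroed out. -/
def blockedId (n : ℕ) (S : Finset (Fin n)) : Matrix (Fin n) (Fin n) ℂ :=
  Matrix.of fun i j => if j ∈ S then 0 else if i = j then 1 else 0

/-- `col{A - λI, I^{[n]\S}}`. -/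
def stackTwo (n : ℕ) (A : Matrix (Fin n) (Fin n) ℝ) (lam : ℂ) (S : Finset (Fin n)) :
    Matrix (Fin n ⊕ Fin n) (Fin n) ℂ :=
  Matrix.fromRows (A.map Complex.ofReal - lam • (1 : Matrix (Fin n) (Fin n) ℂ)) (blockedId n S)

/-- `col{A - λI, I^{[n]\S}, F}`. -/
def stackThree (n r : ℕ) (A : Matrix (Fin n) (Fin n) ℝ) (lam : ℂ)
    (F : Matrix (Fin r) (Fin n) ℝ) (S : Finset (Fin n)) :
    Matrix ((Fin n ⊕ Fin n) ⊕ Fin r) (Fin n) ℂ :=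
  Matrix.fromRows (stackTwo n A lam S) (F.map Complex.ofReal)

/-! Let `P` be the row space of `col{A - λI, I^{[n]\S*}}` and `W` that of `F`. Deleting `s` from
`S*` adjoins `e_s` to `P`: this raises `rank P` by at most one, and raises `rank (P ⊔ W)` by
exactly one unless `e_s ∈ P ⊔ W`. By minimality every such deletion closes the gap
`rank P < rank (P ⊔ W)`, so each `e_s` with `s ∈ S*` lies in `P ⊔ W`, which is then everything,
and the gap is exactly one. -/

open Submodule Module Set

section Gap

variable {K V : Type*} [DivisionRing K] [AddCommGroup V] [Module K V] [FiniteDimensional K V]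

theorem Submodule.finrank_sup_span_singleton_le (p : Submodule K V) (v : V) :
    finrank K ↥(p ⊔ K ∙ v) ≤ finrank K p + 1 := by
  by_cases hv : v ∈ p
  · rw [sup_eq_left.mpr ((span_singleton_le_iff_mem v p).mpr hv)]
    omega
  · exact (finrank_sup_span_singleton hv).le

theorem Submodule.mem_sup_of_finrank_sup_sup_span_singleton_le {P W : Submodule K V} {v : V}
    (hgap : finrank K P < finrank K ↥(P ⊔ W))
    (hv : finrank K ↥(P ⊔ K ∙ v ⊔ W) ≤ finrank K ↥(P ⊔ K ∙ v)) : v ∈ P ⊔ W := by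
  by_contra hvW
  have hW := finrank_sup_span_singleton hvW
  have hP := P.finrank_sup_span_singleton_le v
  rw [sup_right_comm] at hv
  omega

theorem Submodule.finrank_sup_eq_and_finrank_add_one_eq_of_forall_finrank_le
    {P W : Submodule K V} {X : Set V} (hspan : P ⊔ span K X = ⊤)
    (hgap : finrank K P < finrank K ↥(P ⊔ W))
    (hmin : ∀ v ∈ X, finrank K ↥(P ⊔ K ∙ v ⊔ W) ≤ finrank K ↥(P ⊔ K ∙ v)) :
    finrank K ↥(P ⊔ W) = finrank K V ∧ finrank K P + 1 = finrank K V := by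
  have htop : P ⊔ W = ⊤ := top_unique <| hspan ▸ sup_le le_sup_left
    (span_le.mpr fun v hv => mem_sup_of_finrank_sup_sup_span_singleton_le hgap (hmin v hv))
  obtain ⟨v, hv⟩ : X.Nonempty := by
    rw [nonempty_iff_ne_empty]
    rintro rfl
    rw [span_empty, sup_bot_eq] at hspan
    rw [hspan, top_sup_eq] at hgap
    exact hgap.false
  have hmono : finrank K ↥(P ⊔ W) ≤ finrank K ↥(P ⊔ K ∙ v ⊔ W) :=
    finrank_mono (sup_right_comm P W _ ▸ le_sup_left)
  have hP := P.finrank_sup_span_singleton_le v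
  have hv := hmin v hv
  rw [htop, finrank_top] at hgap hmono ⊢
  omega

end Gap

section Spans

variable {R M ι : Type*} [Semiring R] [AddCommMonoid M] [Module R M]

theorem Matrix.span_range_row_fromRows {m₁ m₂ n : Type*} (B : Matrix m₁ n R) (C : Matrix m₂ n R) :
    span R (range (Matrix.fromRows B C).row) = span R (range B.row) ⊔ span R (range C.row) := by
  rw [← span_union, ← Set.Sum.elim_range]
  rfl

theorem Submodule.span_image_compl_erase [DecidableEq ι] (e : ι → M) (S : Finset ι) (s : ι) :
    span R (e '' (↑(S.erase s))ᶜ) = span R (e '' (↑S)ᶜ) ⊔ R ∙ e s := by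
  rw [Finset.coe_erase, compl_sdiff, singleton_union, image_insert_eq, span_insert, sup_comm]

theorem Submodule.span_image_compl_sup_span_image (e : ι → M) (S : Set ι) :
    span R (e '' Sᶜ) ⊔ span R (e '' S) = span R (range e) := by
  rw [← span_union, ← image_union, compl_union_self, image_univ]

end Spans

section BlockedRows

variable {n : ℕ}

theorem blockedId_row (S : Finset (Fin n)) (i : Fin n) :
    (blockedId n S).row i = if i ∈ S then 0 else Pi.basisFun ℂ (Fin n) i := by
  ext j
  simp only [Matrix.row, blockedId, Matrix.of_apply, Pi.basisFun_apply, Pi.zero_apply,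
    apply_ite (fun v : Fin n → ℂ => v j), Pi.single_apply]
  grind

theorem span_range_row_blockedId (S : Finset (Fin n)) :
    span ℂ (range (blockedId n S).row) = span ℂ (Pi.basisFun ℂ (Fin n) '' (↑S)ᶜ) := by
  apply le_antisymm <;> rw [span_le]
  · rintro _ ⟨i, rfl⟩
    rw [blockedId_row]
    split_ifs with hi
    · exact zero_mem _
    · exact subset_span ⟨i, hi, rfl⟩
  · rintro _ ⟨i, hi, rfl⟩
    exact subset_span ⟨i, (blockedId_row S i).trans (if_neg hi)⟩

theorem span_range_row_stackTwo (A : Matrix (Fin n) (Fin n) ℝ) (lam : ℂ) (S : Finset (Fin n)) :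
    span ℂ (range (stackTwo n A lam S).row) =
      span ℂ (range (A.map Complex.ofReal - lam • (1 : Matrix (Fin n) (Fin n) ℂ)).row) ⊔
        span ℂ (Pi.basisFun ℂ (Fin n) '' (↑S)ᶜ) := by
  rw [stackTwo, Matrix.span_range_row_fromRows, span_range_row_blockedId]

theorem rank_stackTwo (A : Matrix (Fin n) (Fin n) ℝ) (lam : ℂ) (S : Finset (Fin n)) :
    (stackTwo n A lam S).rank =
      finrank ℂ ↥(span ℂ (range (A.map Complex.ofReal - lam • (1 : Matrix (Fin n) (Fin n) ℂ)).row) ⊔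
        span ℂ (Pi.basisFun ℂ (Fin n) '' (↑S)ᶜ)) := by
  rw [Matrix.rank_eq_finrank_span_row, span_range_row_stackTwo]

theorem rank_stackThree {r : ℕ} (A : Matrix (Fin n) (Fin n) ℝ) (lam : ℂ)
    (F : Matrix (Fin r) (Fin n) ℝ) (S : Finset (Fin n)) :
    (stackThree n r A lam F S).rank =
      finrank ℂ ↥(span ℂ (range (A.map Complex.ofReal - lam • (1 : Matrix (Fin n) (Fin n) ℂ)).row) ⊔
        span ℂ (Pi.basisFun ℂ (Fin n) '' (↑S)ᶜ) ⊔ span ℂ (range (F.map Complex.ofReal).row)) := by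
  rw [Matrix.rank_eq_finrank_span_row, stackThree, Matrix.span_range_row_fromRows,
    span_range_row_stackTwo]

end BlockedRows

/-- If `S*` has minimum cardinality among sets with
`rank col{A-λI, I^{[n]\S}, F} > rank col{A-λI, I^{[n]\S}}`, then these ranks are `n` and
`n - 1` respectively. -/
theorem minimum_blocking_set_ranks (n r : ℕ)
    (A : Matrix (Fin n) (Fin n) ℝ) (lam : ℂ) (F : Matrix (Fin r) (Fin n) ℝ)
    (Sstar : Finset (Fin n))
    (hfeas : (stackThree n r A lam F Sstar).rank > (stackTwo n A lam Sstar).rank)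
    (hmin : ∀ S : Finset (Fin n),
      (stackThree n r A lam F S).rank > (stackTwo n A lam S).rank → Sstar.card ≤ S.card) :
    (stackThree n r A lam F Sstar).rank = n ∧ (stackTwo n A lam Sstar).rank = n - 1 := by
  rw [rank_stackTwo, rank_stackThree] at hfeas ⊢
  set e := Pi.basisFun ℂ (Fin n)
  set P := span ℂ (range (A.map Complex.ofReal - lam • (1 : Matrix (Fin n) (Fin n) ℂ)).row) ⊔
    span ℂ (e '' (↑Sstar)ᶜ)
  set W := span ℂ (range (F.map Complex.ofReal).row)
  have hspan : P ⊔ span ℂ (e '' Sstar) = ⊤ := by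
    rw [sup_assoc, span_image_compl_sup_span_image, e.span_eq, sup_top_eq]
  have hclosed : ∀ v ∈ e '' Sstar, finrank ℂ ↥(P ⊔ ℂ ∙ v ⊔ W) ≤ finrank ℂ ↥(P ⊔ ℂ ∙ v) := by
    rintro _ ⟨s, hs, rfl⟩
    by_contra hgap
    refine (Finset.card_erase_lt_of_mem hs).not_ge (hmin _ ?_)
    rw [rank_stackTwo, rank_stackThree, span_image_compl_erase, ← sup_assoc]
    exact not_le.mp hgap
  obtain ⟨h₃, h₂⟩ := finrank_sup_eq_and_finrank_add_one_eq_of_forall_finrank_le hspan hfeas hclosed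
  rw [Module.finrank_fin_fun] at h₃ h₂
  omega
end

section
/- Moreover, any minimum-cardinality set S* satisfying rank(col{A − λI, I^{[n]\S*}, F}) > rank(col{A − λI, I^{[n]\S*}}) is a minimal set satisfying rank(col{A − λI, I^{[n]\S*}}) = n − 1, i.e., no proper subset S' ⊊ S* satisfies rank(col{A − λI, I^{[n]\S'}}) = n − 1. -/
open Matrix Submodule Module

section Helpers
variable {n : ℕ}

/-- standard basis row vector -/
def ev (n : ℕ) (i : Fin n) : Fin n → ℂ := fun j => if i = j then 1 else 0

lemma eq_top_of_ev_mem {U : Submodule ℂ (Fin n → ℂ)} (h : ∀ i, ev n i ∈ U) : U = ⊤ := by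
  rw [eq_top_iff]
  intro x _
  have hx : x = ∑ i, x i • ev n i := by
    funext j
    simp [ev, Finset.sum_apply, mul_ite, mul_one, mul_zero]
  rw [hx]
  exact Submodule.sum_mem _ fun i _ => Submodule.smul_mem _ _ (h i)

lemma blockedId_row_notmem {S : Finset (Fin n)} {i : Fin n} (hi : i ∉ S) :
    blockedId n S i = ev n i := by
  funext j
  by_cases hj : j ∈ S
  · have : i ≠ j := fun h => hi (h ▸ hj)
    simp [blockedId, ev, hj, this]
  · simp [blockedId, ev, hj]

lemma blockedId_row_mem {S : Finset (Fin n)} {i : Fin n} (hi : i ∈ S) :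
    blockedId n S i = 0 := by
  funext j
  by_cases hj : j ∈ S
  · simp [blockedId, hj]
  · have : i ≠ j := fun h => hj (h ▸ hi)
    simp [blockedId, hj, this]

end Helpers

section Main
open Matrix Submodule Module

variable {n r : ℕ} (A : Matrix (Fin n) (Fin n) ℝ) (lam : ℂ) (F : Matrix (Fin r) (Fin n) ℝ)

noncomputable def sp2 (S : Finset (Fin n)) : Submodule ℂ (Fin n → ℂ) :=
  span ℂ (Set.range (stackTwo n A lam S))

noncomputable def sp3 (S : Finset (Fin n)) : Submodule ℂ (Fin n → ℂ) :=
  span ℂ (Set.range (stackThree n r A lam F S))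

lemma rank2_eq (S : Finset (Fin n)) :
    (stackTwo n A lam S).rank = finrank ℂ (sp2 A lam S) :=
  Matrix.rank_eq_finrank_span_row _

lemma rank3_eq (S : Finset (Fin n)) :
    (stackThree n r A lam F S).rank = finrank ℂ (sp3 A lam F S) :=
  Matrix.rank_eq_finrank_span_row _

lemma sp2_le_sp3 (S : Finset (Fin n)) : sp2 A lam S ≤ sp3 A lam F S := by
  refine span_le.2 ?_
  rintro _ ⟨i, rfl⟩
  exact subset_span ⟨Sum.inl i, rfl⟩

lemma ev_mem_sp2 {S : Finset (Fin n)} {i : Fin n} (hi : i ∉ S) : ev n i ∈ sp2 A lam S := by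
  rw [← blockedId_row_notmem hi]
  exact subset_span ⟨Sum.inr i, rfl⟩

lemma sp2_mono {S S' : Finset (Fin n)} (h : S' ⊆ S) : sp2 A lam S ≤ sp2 A lam S' := by
  refine span_le.2 ?_
  rintro _ ⟨i, rfl⟩
  rcases i with i | i
  · exact subset_span ⟨Sum.inl i, rfl⟩
  · by_cases hi : i ∈ S
    · have : stackTwo n A lam S (Sum.inr i) = 0 := blockedId_row_mem hi
      rw [this]; exact zero_mem _
    · have hi' : i ∉ S' := fun h' => hi (h h')
      refine subset_span ⟨Sum.inr i, ?_⟩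
      show blockedId n S' i = blockedId n S i
      rw [blockedId_row_notmem hi', blockedId_row_notmem hi]

lemma sp2_erase_le {S : Finset (Fin n)} (s : Fin n) :
    sp2 A lam (S.erase s) ≤ sp2 A lam S ⊔ span ℂ {ev n s} := by
  refine span_le.2 ?_
  rintro _ ⟨i, rfl⟩
  rcases i with i | i
  · exact le_sup_left (α := Submodule ℂ (Fin n → ℂ)) (subset_span ⟨Sum.inl i, rfl⟩)
  · by_cases hi : i ∈ S.erase s
    · have : stackTwo n A lam (S.erase s) (Sum.inr i) = 0 := blockedId_row_mem hi
      rw [this]; exact zero_mem _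
    · have hrow : stackTwo n A lam (S.erase s) (Sum.inr i) = ev n i := blockedId_row_notmem hi
      rw [hrow]
      by_cases his : i = s
      · subst his
        exact le_sup_right (α := Submodule ℂ (Fin n → ℂ)) (subset_span rfl)
      · have hiS : i ∉ S := fun hS => hi (Finset.mem_erase.2 ⟨his, hS⟩)
        exact le_sup_left (α := Submodule ℂ (Fin n → ℂ)) (ev_mem_sp2 A lam hiS)

lemma F_row_mem {S : Finset (Fin n)}
    (h : (stackThree n r A lam F S).rank ≤ (stackTwo n A lam S).rank) (i : Fin r) :
    (F.map Complex.ofReal) i ∈ sp2 A lam S := by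
  have heq : sp2 A lam S = sp3 A lam F S := by
    refine Submodule.eq_of_le_of_finrank_le (sp2_le_sp3 A lam F S) ?_
    rw [← rank2_eq, ← rank3_eq]; exact h
  rw [heq]
  exact subset_span ⟨Sum.inr i, rfl⟩

end Main

/-- A minimum-cardinality set `S*` with
`rank col{A-λI, I^{[n]\S*}, F} > rank col{A-λI, I^{[n]\S*}}` is a minimal set satisfying
`rank col{A-λI, I^{[n]\S*}} = n - 1`: no proper subset achieves rank `n - 1`. -/
theorem minimum_blocking_set_minimal (n r : ℕ)
    (A : Matrix (Fin n) (Fin n) ℝ) (lam : ℂ) (F : Matrix (Fin r) (Fin n) ℝ)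
    (Sstar : Finset (Fin n))
    (hfeas : (stackThree n r A lam F Sstar).rank > (stackTwo n A lam Sstar).rank)
    (hmin : ∀ S : Finset (Fin n),
      (stackThree n r A lam F S).rank > (stackTwo n A lam S).rank → Sstar.card ≤ S.card) :
    (stackTwo n A lam Sstar).rank = n - 1 ∧
      ∀ S' : Finset (Fin n), S' ⊂ Sstar → (stackTwo n A lam S').rank ≠ n - 1 := by
  classical
  open Matrix Submodule Module in
  -- a row of F outside the row space of stackTwo Sstar
  have hfr : ¬ ∀ i, (F.map Complex.ofReal) i ∈ sp2 A lam Sstar := by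
    intro hall
    have hle : sp3 A lam F Sstar ≤ sp2 A lam Sstar := by
      refine span_le.2 ?_
      rintro _ ⟨i, rfl⟩
      rcases i with i | i
      · exact subset_span ⟨i, rfl⟩
      · exact hall i
    have : (stackThree n r A lam F Sstar).rank ≤ (stackTwo n A lam Sstar).rank := by
      rw [rank2_eq, rank3_eq]
      exact Submodule.finrank_mono hle
    omega
  obtain ⟨i0, hf⟩ := not_forall.1 hfr
  set f : Fin n → ℂ := (F.map Complex.ofReal) i0 with hfdef
  have hfne : f ≠ 0 := fun h => hf (h ▸ zero_mem _)
  have hr3n : (stackThree n r A lam F Sstar).rank ≤ n := by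
    simpa using (stackThree n r A lam F Sstar).rank_le_card_width
  have hn1 : 1 ≤ n := by omega
  -- Part 1
  have part1 : (stackTwo n A lam Sstar).rank = n - 1 := by
    by_contra hne
    have hlt : (stackTwo n A lam Sstar).rank + 1 < n := by omega
    -- U = sp2 Sstar ⊔ span{f} is everything
    set U : Submodule ℂ (Fin n → ℂ) := sp2 A lam Sstar ⊔ span ℂ {f} with hU
    have hUtop : U = ⊤ := by
      apply eq_top_of_ev_mem
      intro s
      by_cases hs : s ∈ Sstar
      · -- use minimality on Sstar.erase s
        have herank : ¬ (stackThree n r A lam F (Sstar.erase s)).rank >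
            (stackTwo n A lam (Sstar.erase s)).rank := by
          intro hgt
          have := hmin _ hgt
          have := Finset.card_erase_of_mem hs
          have hc : 1 ≤ Sstar.card := Finset.card_pos.2 ⟨s, hs⟩
          omega
        have hmem : f ∈ sp2 A lam (Sstar.erase s) :=
          F_row_mem A lam F (by omega) i0
        have hmem' : f ∈ sp2 A lam Sstar ⊔ span ℂ {ev n s} :=
          sp2_erase_le A lam s hmem
        obtain ⟨v, hv, c, hc, hvc⟩ := Submodule.mem_sup.1 hmem'
        obtain ⟨a, rfl⟩ := Submodule.mem_span_singleton.1 hc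
        have ha : a ≠ 0 := by
          rintro rfl
          apply hf
          rw [← hvc]
          simpa using hv
        have : ev n s = a⁻¹ • (f - v) := by
          rw [← hvc, add_sub_cancel_left, smul_smul, inv_mul_cancel₀ ha, one_smul]
        rw [this]
        refine Submodule.smul_mem _ _ (Submodule.sub_mem _ ?_ ?_)
        · exact le_sup_right (α := Submodule ℂ (Fin n → ℂ)) (subset_span rfl)
        · exact le_sup_left (α := Submodule ℂ (Fin n → ℂ)) hv
      · exact le_sup_left (α := Submodule ℂ (Fin n → ℂ)) (ev_mem_sp2 A lam hs)
    have hfin : finrank ℂ U = n := by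
      rw [hUtop, finrank_top, Module.finrank_fin_fun]
    have hle : finrank ℂ U ≤ finrank ℂ (sp2 A lam Sstar) + 1 := by
      calc finrank ℂ U ≤ finrank ℂ (sp2 A lam Sstar) + finrank ℂ (span ℂ {f}) :=
            Submodule.finrank_add_le_finrank_add_finrank _ _
        _ ≤ finrank ℂ (sp2 A lam Sstar) + 1 := by
            rw [finrank_span_singleton hfne]
    rw [← rank2_eq] at hle
    omega
  refine ⟨part1, ?_⟩
  -- Part 2
  intro S' hS' hrank
  have hcard : S'.card < Sstar.card := Finset.card_lt_card hS'
  have h3 : (stackThree n r A lam F S').rank ≤ (stackTwo n A lam S').rank := by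
    by_contra hgt
    have := hmin S' (by omega)
    omega
  have hfS' : f ∈ sp2 A lam S' := F_row_mem A lam F h3 i0
  have hle : sp2 A lam Sstar ≤ sp2 A lam S' := sp2_mono A lam hS'.1
  have heq : sp2 A lam Sstar = sp2 A lam S' := by
    refine Submodule.eq_of_le_of_finrank_le hle ?_
    rw [← rank2_eq, ← rank2_eq, part1, hrank]
  exact hf (heq ▸ hfS')
end

section
/- Suppose rank(col{A − λI, I^{T}, f}) = rank(col{A − λI, I^{T}}) = m ≤ n for some T ⊆ {1,...,n} and row vector f. If Δ* ⊆ T is a minimum-cardinality set with rank(col{A − λI, I^{T\Δ*}, f}) > rank(col{A − λI, I^{T\Δ*}}), then rank(col{A − λI, I^{T\Δ*}, f}) = m and rank(col{A − λI, I^{T\Δ*}}) = m − 1, and Δ* is a minimal subset of T achieving rank(col{A − λI, I^{T\Δ*}}) = m − 1. -/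
/-- `I^{T}`: the identity matrix with the columns outside `T` zeroed out. -/
def idOn (n : ℕ) (T : Finset (Fin n)) : Matrix (Fin n) (Fin n) ℂ :=
  Matrix.of fun i j => if j ∈ T ∧ i = j then (1 : ℂ) else 0

/-- `col{A - λI, I^{T}}`. -/
def stk2 (n : ℕ) (A : Matrix (Fin n) (Fin n) ℝ) (lam : ℂ) (T : Finset (Fin n)) :
    Matrix (Fin n ⊕ Fin n) (Fin n) ℂ :=
  Matrix.fromRows (A.map Complex.ofReal - lam • (1 : Matrix (Fin n) (Fin n) ℂ)) (idOn n T)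

/-- `col{A - λI, I^{T}, f}` for a row vector `f`. -/
def stk3 (n : ℕ) (A : Matrix (Fin n) (Fin n) ℝ) (lam : ℂ) (f : Matrix (Fin 1) (Fin n) ℝ)
    (T : Finset (Fin n)) : Matrix ((Fin n ⊕ Fin n) ⊕ Fin 1) (Fin n) ℂ :=
  Matrix.fromRows (stk2 n A lam T) (f.map Complex.ofReal)


/-! Write `U` for the row space of `col{A - λI, I^{T\Δ*}}` and `e_x` for the standard basis
vectors. By minimality of `Δ*`, for every `x ∈ Δ*` the row `f` lies in `U + span e_x` but not in
`U`, so by the exchange property `e_x ∈ U + span f`. Hence `U + span f` is the whole row space of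
`col{A - λI, I^T}`, which has dimension `m` and contains `f`; so `dim U = m - 1`. For `Δ' ⊂ Δ*`
the row space for `T \ Δ'` contains both `U` and `f`, hence is again `m`-dimensional. -/

open Submodule Module

namespace Submodule

variable {K M : Type*} [DivisionRing K] [AddCommGroup M] [Module K M]

theorem mem_sup_span_singleton_exchange {U : Submodule K M} {u v : M}
    (hv : v ∈ U ⊔ K ∙ u) (hvU : v ∉ U) : u ∈ U ⊔ K ∙ v := by
  rw [sup_comm, ← span_eq U, ← span_insert] at hv ⊢
  exact mem_span_insert_exchange hv (by rwa [span_eq])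

theorem finrank_lt_finrank_sup_span_singleton_iff [FiniteDimensional K M] {U : Submodule K M}
    {v : M} : finrank K U < finrank K ↥(U ⊔ K ∙ v) ↔ v ∉ U := by
  refine ⟨fun h hv => ?_, fun hv => ?_⟩
  · rw [sup_eq_left.2 ((span_singleton_le_iff_mem v U).2 hv)] at h
    exact lt_irrefl _ h
  · rw [finrank_sup_span_singleton hv]
    exact Nat.lt_succ_self _

end Submodule

section AugmentedSpan

variable {K M ι : Type*} [DivisionRing K] [AddCommGroup M] [Module K M]

/-- With `W` the row space of `A - λI` and `e` the standard basis, this is the row space of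
`col{A - λI, I^S}`. -/
def augmentedSpan (W : Submodule K M) (e : ι → M) (S : Finset ι) : Submodule K M :=
  W ⊔ span K (e '' S)

variable {W : Submodule K M} {e : ι → M}

theorem augmentedSpan_le_iff {S : Finset ι} {X : Submodule K M} :
    augmentedSpan W e S ≤ X ↔ W ≤ X ∧ ∀ j ∈ S, e j ∈ X := by
  simp [augmentedSpan, span_le, Set.subset_def]

theorem le_augmentedSpan (S : Finset ι) : W ≤ augmentedSpan W e S := le_sup_left

theorem apply_mem_augmentedSpan {S : Finset ι} {j : ι} (hj : j ∈ S) :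
    e j ∈ augmentedSpan W e S :=
  mem_sup_right (subset_span ⟨j, hj, rfl⟩)

theorem augmentedSpan_mono {S₁ S₂ : Finset ι} (h : S₁ ⊆ S₂) :
    augmentedSpan W e S₁ ≤ augmentedSpan W e S₂ :=
  sup_le_sup_left (span_mono (Set.image_mono (Finset.coe_subset.2 h))) W

theorem augmentedSpan_sdiff_erase_le [DecidableEq ι] (S Δ : Finset ι) (x : ι) :
    augmentedSpan W e (S \ Δ.erase x) ≤ augmentedSpan W e (S \ Δ) ⊔ K ∙ e x := by
  refine augmentedSpan_le_iff.2 ⟨(le_augmentedSpan _).trans le_sup_left, fun j hj => ?_⟩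
  by_cases hjx : j = x
  · exact mem_sup_right (hjx ▸ mem_span_singleton_self (e j))
  · refine mem_sup_left (apply_mem_augmentedSpan ?_)
    simp_all

theorem augmentedSpan_le_sdiff_sup_of_minimal [DecidableEq ι] {T Δ : Finset ι} {v : M}
    (hvΔ : v ∉ augmentedSpan W e (T \ Δ))
    (hmin : ∀ x ∈ Δ, v ∈ augmentedSpan W e (T \ Δ.erase x)) :
    augmentedSpan W e T ≤ augmentedSpan W e (T \ Δ) ⊔ K ∙ v := by
  refine augmentedSpan_le_iff.2 ⟨(le_augmentedSpan _).trans le_sup_left, fun j hj => ?_⟩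
  by_cases hjΔ : j ∈ Δ
  · exact mem_sup_span_singleton_exchange
      (augmentedSpan_sdiff_erase_le T Δ j (hmin j hjΔ)) hvΔ
  · exact mem_sup_left (apply_mem_augmentedSpan (Finset.mem_sdiff.2 ⟨hj, hjΔ⟩))

variable [DecidableEq ι] {T Δ : Finset ι} {v : M}

theorem augmentedSpan_sdiff_sup_eq_of_minimal (hvT : v ∈ augmentedSpan W e T)
    (hvΔ : v ∉ augmentedSpan W e (T \ Δ)) (hmin : ∀ Δ' ⊂ Δ, v ∈ augmentedSpan W e (T \ Δ')) :
    augmentedSpan W e (T \ Δ) ⊔ K ∙ v = augmentedSpan W e T :=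
  le_antisymm
    (sup_le (augmentedSpan_mono Finset.sdiff_subset) ((span_singleton_le_iff_mem v _).2 hvT))
    (augmentedSpan_le_sdiff_sup_of_minimal hvΔ fun _ hx => hmin _ (Finset.erase_ssubset hx))

theorem augmentedSpan_sdiff_eq_of_minimal (hvT : v ∈ augmentedSpan W e T)
    (hvΔ : v ∉ augmentedSpan W e (T \ Δ)) (hmin : ∀ Δ' ⊂ Δ, v ∈ augmentedSpan W e (T \ Δ'))
    {Δ' : Finset ι} (hΔ' : Δ' ⊂ Δ) : augmentedSpan W e (T \ Δ') = augmentedSpan W e T := by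
  refine le_antisymm (augmentedSpan_mono Finset.sdiff_subset) ?_
  rw [← augmentedSpan_sdiff_sup_eq_of_minimal hvT hvΔ hmin]
  exact sup_le (augmentedSpan_mono (Finset.sdiff_subset_sdiff le_rfl hΔ'.subset))
    ((span_singleton_le_iff_mem v _).2 (hmin Δ' hΔ'))

end AugmentedSpan

theorem Matrix.span_range_fromRows {R m₁ m₂ ι : Type*} [Semiring R] (A₁ : Matrix m₁ ι R)
    (A₂ : Matrix m₂ ι R) :
    span R (Set.range (Matrix.fromRows A₁ A₂).row) =
      span R (Set.range A₁.row) ⊔ span R (Set.range A₂.row) := by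
  rw [← span_union, ← Set.Sum.elim_range]
  rfl

section RowSpaces

variable {n : ℕ}

theorem row_idOn (S : Finset (Fin n)) (i : Fin n) :
    (idOn n S).row i = if i ∈ S then Pi.single i 1 else 0 := by
  ext j
  by_cases hi : i ∈ S <;> by_cases hij : i = j <;> simp_all [idOn, Matrix.row]

theorem span_range_idOn (S : Finset (Fin n)) :
    span ℂ (Set.range (idOn n S).row) = span ℂ ((fun j => Pi.single j 1) '' S) := by
  refine le_antisymm (span_le.2 ?_) (span_mono ?_)
  · rintro _ ⟨i, rfl⟩
    rw [row_idOn]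
    split_ifs with hi
    · exact subset_span ⟨i, hi, rfl⟩
    · exact zero_mem _
  · rintro _ ⟨j, hj, rfl⟩
    exact ⟨j, by simp [row_idOn, Finset.mem_coe.1 hj]⟩

theorem span_range_stk2 (A : Matrix (Fin n) (Fin n) ℝ) (lam : ℂ) (S : Finset (Fin n)) :
    span ℂ (Set.range (stk2 n A lam S).row) = augmentedSpan
      (span ℂ (Set.range (A.map Complex.ofReal - lam • (1 : Matrix (Fin n) (Fin n) ℂ)).row))
      (fun j => Pi.single j 1) S := by
  rw [stk2, Matrix.span_range_fromRows, span_range_idOn, augmentedSpan]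

theorem rank_stk2 (A : Matrix (Fin n) (Fin n) ℝ) (lam : ℂ) (S : Finset (Fin n)) :
    (stk2 n A lam S).rank = finrank ℂ ↥(augmentedSpan
      (span ℂ (Set.range (A.map Complex.ofReal - lam • (1 : Matrix (Fin n) (Fin n) ℂ)).row))
      (fun j => Pi.single j 1) S) := by
  rw [Matrix.rank_eq_finrank_span_row, span_range_stk2]

theorem rank_stk3 (A : Matrix (Fin n) (Fin n) ℝ) (lam : ℂ) (f : Matrix (Fin 1) (Fin n) ℝ)
    (S : Finset (Fin n)) :
    (stk3 n A lam f S).rank = finrank ℂ ↥(augmentedSpan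
      (span ℂ (Set.range (A.map Complex.ofReal - lam • (1 : Matrix (Fin n) (Fin n) ℂ)).row))
      (fun j => Pi.single j 1) S ⊔ ℂ ∙ fun j => (f 0 j : ℂ)) := by
  rw [Matrix.rank_eq_finrank_span_row, stk3, Matrix.span_range_fromRows, span_range_stk2,
    Set.range_unique (f := (f.map Complex.ofReal).row)]
  rfl

end RowSpaces

theorem minimum_blocking_in_restricted_set_general (n m : ℕ)
    (A : Matrix (Fin n) (Fin n) ℝ) (lam : ℂ) (f : Matrix (Fin 1) (Fin n) ℝ)
    (T : Finset (Fin n))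
    (h3 : (stk3 n A lam f T).rank = m) (h2 : (stk2 n A lam T).rank = m)
    (Δstar : Finset (Fin n)) (hΔT : Δstar ⊆ T)
    (hfeas : (stk3 n A lam f (T \ Δstar)).rank > (stk2 n A lam (T \ Δstar)).rank)
    (hmin : ∀ Δ : Finset (Fin n), Δ ⊆ T →
      (stk3 n A lam f (T \ Δ)).rank > (stk2 n A lam (T \ Δ)).rank → Δstar.card ≤ Δ.card) :
    (stk3 n A lam f (T \ Δstar)).rank = m ∧
    (stk2 n A lam (T \ Δstar)).rank = m - 1 ∧
    ∀ Δ' : Finset (Fin n), Δ' ⊂ Δstar → (stk2 n A lam (T \ Δ')).rank ≠ m - 1 := by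
  simp only [rank_stk2, rank_stk3, gt_iff_lt, finrank_lt_finrank_sup_span_singleton_iff]
    at h2 h3 hfeas hmin ⊢
  set W := span ℂ (Set.range (A.map Complex.ofReal - lam • (1 : Matrix (Fin n) (Fin n) ℂ)).row)
  set e : Fin n → Fin n → ℂ := fun j => Pi.single j 1
  set v : Fin n → ℂ := fun j => (f 0 j : ℂ)
  have hvT : v ∈ augmentedSpan W e T := by
    by_contra hv
    have := finrank_lt_finrank_sup_span_singleton_iff.2 hv
    omega
  have hvSsubset : ∀ Δ ⊂ Δstar, v ∈ augmentedSpan W e (T \ Δ) := fun Δ hΔ =>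
    not_not.1 fun hv => (Finset.card_lt_card hΔ).not_ge (hmin Δ (hΔ.subset.trans hΔT) hv)
  have hsup := augmentedSpan_sdiff_sup_eq_of_minimal hvT hfeas hvSsubset
  have hdim := finrank_sup_span_singleton hfeas
  rw [hsup] at hdim
  refine ⟨by rw [hsup, h2], by omega, fun Δ' hΔ' => ?_⟩
  rw [augmentedSpan_sdiff_eq_of_minimal hvT hfeas hvSsubset hΔ']
  omega

/-- Generalized optimality characterization (Proposition 2 of the paper): if
`rank col{A-λI, I^T, f} = rank col{A-λI, I^T} = m ≤ n` and `Δ* ⊆ T` is a set of minimum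
cardinality with `rank col{A-λI, I^{T\Δ*}, f} > rank col{A-λI, I^{T\Δ*}}`, then these
ranks equal `m` and `m - 1`, and `Δ*` is a minimal subset of `T` achieving
`rank col{A-λI, I^{T\Δ*}} = m - 1`. -/
theorem minimum_blocking_in_restricted_set (n m : ℕ) (hm : m ≤ n)
    (A : Matrix (Fin n) (Fin n) ℝ) (lam : ℂ) (f : Matrix (Fin 1) (Fin n) ℝ)
    (T : Finset (Fin n))
    (h3 : (stk3 n A lam f T).rank = m) (h2 : (stk2 n A lam T).rank = m)
    (Δstar : Finset (Fin n)) (hΔT : Δstar ⊆ T)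
    (hfeas : (stk3 n A lam f (T \ Δstar)).rank > (stk2 n A lam (T \ Δstar)).rank)
    (hmin : ∀ Δ : Finset (Fin n), Δ ⊆ T →
      (stk3 n A lam f (T \ Δ)).rank > (stk2 n A lam (T \ Δ)).rank → Δstar.card ≤ Δ.card) :
    (stk3 n A lam f (T \ Δstar)).rank = m ∧
    (stk2 n A lam (T \ Δstar)).rank = m - 1 ∧
    ∀ Δ' : Finset (Fin n), Δ' ⊂ Δstar → (stk2 n A lam (T \ Δ')).rank ≠ m - 1 :=
  minimum_blocking_in_restricted_set_general n m A lam f T h3 h2 Δstar hΔT hfeas hmin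
end
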